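/- For any fully connected feedforward ReLU network φ: ℝ → ℝ² and any n-tiled histogram distribution P ∈ E[0,1]²ₙ, the total variation distance between P and the pushforward φ#U of the uniform distribution U on [0,1] under φ equals 1, i.e. TV(P, φ#U) = 1. -/

import Mathlib

/-!
A ReLU network is Lipschitz, so `x ↦ φ (fun _ => x)` is a Lipschitz curve in `ℝ²`; its range has
Hausdorff dimension at most `1 < 2` and is therefore Lebesgue-null. Hence `φ#U` lives on a null
set, while a histogram has a density and gives that set measure zero. Two mutually singular
probability measures are at total variation distance `1`.
-/

open MeasureTheory Set ENNReal

noncomputable section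

/-- Coordinatewise ReLU activation. -/
def relu {m : ℕ} (x : Fin m → ℝ) : Fin m → ℝ := fun i => max 0 (x i)

/-- `M` is an affine map `ℝ^m → ℝ^k`. -/
def IsAffineMap {m k : ℕ} (M : (Fin m → ℝ) → (Fin k → ℝ)) : Prop :=
  ∃ (A : Matrix (Fin k) (Fin m) ℝ) (b : Fin k → ℝ), ∀ x, M x = A.mulVec x + b

/-- `RealizedBy L m0 mL φ N` : the map `φ : ℝ^{m0} → ℝ^{mL}` is a fully connected feedforward
ReLU network of depth `L` and size `N`, i.e. `φ = M_L ∘ ReLU ∘ M_{L-1} ∘ ⋯ ∘ ReLU ∘ M_1` for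
affine maps `M_i : ℝ^{m_{i-1}} → ℝ^{m_i}` with `m_1, …, m_{L-1} > 0` and `N = m_1 + ⋯ + m_L`. -/
def RealizedBy : (L : ℕ) → (m0 mL : ℕ) → ((Fin m0 → ℝ) → (Fin mL → ℝ)) → ℕ → Prop
  | 0, _, _, _, _ => False
  | 1, _, mL, φ, N => IsAffineMap φ ∧ N = mL
  | (L + 2), m0, mL, φ, N =>
      ∃ (m1 : ℕ) (M1 : (Fin m0 → ℝ) → (Fin m1 → ℝ))
        (ψ : (Fin m1 → ℝ) → (Fin mL → ℝ)) (N' : ℕ),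
        0 < m1 ∧ IsAffineMap M1 ∧ RealizedBy (L + 1) m1 mL ψ N' ∧
        N = m1 + N' ∧ ∀ x, φ x = ψ (relu (M1 x))

/-- The uniform probability distribution on `[0,1]`. -/
def Uniform01 : Measure ℝ := volume.restrict (Set.Icc 0 1)

/-- The tile `c_k` in `[0,1]²` (as a subset of `Fin 2 → ℝ`). -/
def tile2 (n : ℕ) (k1 k2 : Fin n) : Set (Fin 2 → ℝ) :=
  {x | x 0 ∈ Set.Icc ((k1 : ℝ) / n) (((k1 : ℝ) + 1) / n) ∧
       x 1 ∈ Set.Icc ((k2 : ℝ) / n) (((k2 : ℝ) + 1) / n)}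

/-- `μ` is an `n`-tiled histogram distribution on `[0,1]²`, i.e. `μ ∈ E[0,1]²ₙ`. -/
def IsHist2 (n : ℕ) (μ : Measure (Fin 2 → ℝ)) : Prop :=
  ∃ w : Fin n → Fin n → ℝ, (∀ k1 k2, 0 < w k1 k2) ∧ (∑ k1, ∑ k2, w k1 k2 = (n : ℝ) ^ 2) ∧
    μ = volume.withDensity fun x =>
      ∑ k1 : Fin n, ∑ k2 : Fin n,
        Set.indicator (tile2 n k1 k2) (fun _ => ENNReal.ofReal (w k1 k2)) x

/-- The total variation distance `TV(μ,ν) = sup_{A measurable} |μ(A) - ν(A)|`. -/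
def tvDist {E : Type*} [MeasurableSpace E] (μ ν : Measure E) : ℝ :=
  ⨆ A : {A : Set E // MeasurableSet A}, |(μ A.1).toReal - (ν A.1).toReal|

theorem IsAffineMap.exists_lipschitzWith {m k : ℕ} {M : (Fin m → ℝ) → (Fin k → ℝ)}
    (hM : IsAffineMap M) : ∃ K, LipschitzWith K M := by
  obtain ⟨A, b, hAb⟩ := hM
  rw [show M = fun x => Matrix.toLin' A x + b from funext hAb]
  exact ⟨_, (Matrix.toLin' A).toContinuousLinearMap.lipschitz.add (LipschitzWith.const b)⟩

theorem lipschitzWith_relu {m : ℕ} : LipschitzWith 1 (relu (m := m)) := by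
  refine LipschitzWith.of_dist_le_mul fun x y => ?_
  rw [NNReal.coe_one, one_mul, dist_pi_le_iff dist_nonneg]
  exact fun i => ((LipschitzWith.eval i).const_max 0).dist_le_mul x y |>.trans_eq (one_mul _)

theorem RealizedBy.exists_lipschitzWith :
    ∀ {L m0 mL : ℕ} {φ : (Fin m0 → ℝ) → (Fin mL → ℝ)} {N : ℕ},
      RealizedBy L m0 mL φ N → ∃ K, LipschitzWith K φ
  | 1, _, _, _, _, h => h.1.exists_lipschitzWith
  | _ + 2, _, _, φ, _, ⟨_, _, _, _, _, hM, hψ, _, hφ⟩ => by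
    obtain ⟨K₁, hK₁⟩ := hM.exists_lipschitzWith
    obtain ⟨K₂, hK₂⟩ := hψ.exists_lipschitzWith
    rw [show φ = _ from funext hφ]
    exact ⟨_, hK₂.comp (lipschitzWith_relu.comp hK₁)⟩

theorem LipschitzWith.volume_range_eq_zero {ι : Type*} [Fintype ι] (hι : 1 < Fintype.card ι)
    {K : NNReal} {g : ℝ → ι → ℝ} (hg : LipschitzWith K g) : volume (range g) = 0 := by
  rw [← hausdorffMeasure_pi_real, ← NNReal.coe_natCast]
  refine hausdorffMeasure_of_dimH_lt ?_
  calc dimH (range g) ≤ dimH (univ : Set ℝ) := hg.dimH_range_le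
    _ = 1 := Real.dimH_univ
    _ < _ := by exact_mod_cast hι

theorem Measure.map_mutuallySingular_of_measure_range_eq_zero {α β : Type*} [MeasurableSpace α]
    [MeasurableSpace β] {g : α → β} (hg : Measurable g) {ν : Measure β} (hν : ν (range g) = 0)
    (μ : Measure α) : μ.map g ⟂ₘ ν := by
  have hmeas := (measurableSet_toMeasurable ν (range g)).compl
  refine ⟨(toMeasurable ν (range g))ᶜ, hmeas, ?_, ?_⟩
  · rw [Measure.map_apply hg hmeas, preimage_compl, compl_empty_iff.2, measure_empty]
    exact eq_univ_of_forall fun x => subset_toMeasurable _ _ (mem_range_self x)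
  · rw [compl_compl, measure_toMeasurable, hν]

instance : IsProbabilityMeasure Uniform01 :=
  ⟨by simp [Uniform01]⟩

theorem tile2_eq_pi (n : ℕ) (k1 k2 : Fin n) :
    tile2 n k1 k2 =
      univ.pi ![Icc ((k1 : ℝ) / n) ((k1 + 1) / n), Icc ((k2 : ℝ) / n) ((k2 + 1) / n)] := by
  ext x
  simp [tile2, mem_pi, Fin.forall_fin_two]

theorem measurableSet_tile2 (n : ℕ) (k1 k2 : Fin n) : MeasurableSet (tile2 n k1 k2) := by
  rw [tile2_eq_pi]
  exact MeasurableSet.univ_pi fun i => by fin_cases i <;> exact measurableSet_Icc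

theorem volume_tile2 {n : ℕ} (hn : 0 < n) (k1 k2 : Fin n) :
    volume (tile2 n k1 k2) = ENNReal.ofReal ((n : ℝ) ^ 2)⁻¹ := by
  have hlen : ∀ k : Fin n, ((k : ℝ) + 1) / n - k / n = (n : ℝ)⁻¹ := fun k => by
    field_simp; ring
  rw [tile2_eq_pi, volume_pi_pi, Fin.prod_univ_two]
  simp only [Matrix.cons_val_zero, Matrix.cons_val_one, Real.volume_Icc, hlen]
  rw [← ENNReal.ofReal_mul (by positivity), ← sq, inv_pow]

theorem IsHist2.absolutelyContinuous {n : ℕ} {P : Measure (Fin 2 → ℝ)} (hP : IsHist2 n P) :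
    P ≪ volume := by
  obtain ⟨w, -, -, rfl⟩ := hP
  exact withDensity_absolutelyContinuous _ _

theorem IsHist2.isProbabilityMeasure {n : ℕ} (hn : 0 < n) {P : Measure (Fin 2 → ℝ)}
    (hP : IsHist2 n P) : IsProbabilityMeasure P := by
  obtain ⟨w, hw, hsum, rfl⟩ := hP
  have hmeas (k1 k2 : Fin n) :
      Measurable ((tile2 n k1 k2).indicator fun _ => ENNReal.ofReal (w k1 k2)) :=
    measurable_const.indicator (measurableSet_tile2 n k1 k2)
  constructor
  rw [withDensity_apply _ MeasurableSet.univ, Measure.restrict_univ,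
    lintegral_finsetSum _ fun k1 _ => Finset.measurable_sum _ fun k2 _ => hmeas k1 k2]
  simp_rw [lintegral_finsetSum _ fun k2 _ => hmeas _ k2,
    lintegral_indicator_const (measurableSet_tile2 n _ _), volume_tile2 hn, ← Finset.sum_mul,
    ← ENNReal.ofReal_sum_of_nonneg fun _ _ => (hw _ _).le]
  rw [← ENNReal.ofReal_sum_of_nonneg fun _ _ => Finset.sum_nonneg fun _ _ => (hw _ _).le, hsum,
    ← ENNReal.ofReal_mul (by positivity), mul_inv_cancel₀ (by positivity), ENNReal.ofReal_one]

theorem tvDist_eq_one_of_mutuallySingular {E : Type*} [MeasurableSpace E] {μ ν : Measure E}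
    [IsProbabilityMeasure μ] [IsProbabilityMeasure ν] (h : μ ⟂ₘ ν) : tvDist μ ν = 1 := by
  have hle (A : {A : Set E // MeasurableSet A}) : |μ.real A - ν.real A| ≤ 1 :=
    abs_sub_le_of_nonneg_of_le measureReal_nonneg measureReal_le_one measureReal_nonneg
      measureReal_le_one
  have hν : ν h.nullSet = 1 :=
    (prob_compl_eq_zero_iff h.measurableSet_nullSet).1 h.measure_compl_nullSet
  refine le_antisymm (ciSup_le hle) (le_ciSup_of_le ⟨1, forall_mem_range.2 hle⟩
    ⟨h.nullSet, h.measurableSet_nullSet⟩ ?_)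
  simp [h.measure_nullSet, hν]

theorem tv_distance_eq_one (n : ℕ) (hn : 1 ≤ n) (N L : ℕ)
    (φ : (Fin 1 → ℝ) → (Fin 2 → ℝ)) (hφ : RealizedBy L 1 2 φ N)
    (P : Measure (Fin 2 → ℝ)) (hP : IsHist2 n P) :
    tvDist P (Uniform01.map fun x : ℝ => φ (fun _ => x)) = 1 := by
  obtain ⟨K, hK⟩ := hφ.exists_lipschitzWith
  have hconst : LipschitzWith 1 fun x : ℝ => fun _ : Fin 1 => x :=
    LipschitzWith.of_dist_le_mul fun x y => by simp [dist_pi_const]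
  have hcurve : LipschitzWith (K * 1) fun x : ℝ => φ fun _ => x := hK.comp hconst
  have := hP.isProbabilityMeasure hn
  have := Measure.isProbabilityMeasure_map hcurve.continuous.aemeasurable (μ := Uniform01)
  have hsing : Uniform01.map (fun x : ℝ => φ fun _ => x) ⟂ₘ volume :=
    Measure.map_mutuallySingular_of_measure_range_eq_zero hcurve.continuous.measurable
      (hcurve.volume_range_eq_zero (by simp)) Uniform01
  exact tvDist_eq_one_of_mutuallySingular
    (hsing.symm.mono_ac hP.absolutelyContinuous Measure.AbsolutelyContinuous.rfl)
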